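/- arXiv:2307.13780 — 2 statements merged into one kernel-verified Lean document; each statement's English description precedes it below -/
import Mathlib

section
/- Let Ω ⊂ R^n be compact, Π = span(φ_1,...,φ_d) a d-dimensional space of monomials with φ_1 ≡ 1, φ_2(x)=x_1,...,φ_{n+1}(x)=x_n, and P : C(Ω) → Π an interpolation projector with admissible nodes x^(j). Let T(x) = (φ_2(x),...,φ_d(x)) and let S ⊂ R^{d−1} be the simplex with vertices T(x^(j)) (assumed nondegenerate). Then (1/2)(1 + 1/(d−1))(‖P‖_Ω − 1) + 1 ≤ ξ(T(Ω); S) ≤ (d/2)(‖P‖_Ω − 1) + 1, where ‖P‖_Ω is the operator norm of P on C(Ω). -/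
/-!
Since `φ 0 ≡ 1` and `T` collects the remaining basis monomials, `Π` consists exactly of the
functions `A ∘ T` with `A` affine on `ℝ^m`, so the Lagrange polynomial `λ_j` is the `j`-th
barycentric coordinate of `T x` with respect to the simplex `S`. A point lies in `σS` iff all
its barycentric coordinates are at least `(1 - σ)/(m + 1)`; hence `ξ(T(Ω); S) = 1 + (m + 1) L⁺`,
where `L` is the maximum of `-λ_j` over `Ω` and all `j`. On the other hand `∑ λ_j = 1` gives
`∑ |λ_j| = 1 + 2 ∑ λ_j⁻`, and at least one `λ_j(x)` is positive, so `1 + 2 L⁺ ≤ ‖P‖ ≤ 1 + 2 m L⁺`.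
-/

/-- The (solid) simplex with vertices `v`. -/
noncomputable def simplexHull {n : ℕ} (v : Fin (n+1) → (Fin n → ℝ)) : Set (Fin n → ℝ) :=
  convexHull ℝ (Set.range v)

/-- The homothetic copy `σS` of the simplex with vertices `v`, with ratio `σ`
about the centroid. -/
noncomputable def scaledSimplex {n : ℕ} (v : Fin (n+1) → (Fin n → ℝ)) (σ : ℝ) :
    Set (Fin n → ℝ) :=
  AffineMap.homothety (Finset.univ.centroid ℝ v) σ '' simplexHull v

/-- The absorption coefficient `ξ(Ω; S)` of `Ω` by the simplex with vertices `v`. -/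
noncomputable def absCoef {n : ℕ} (Ω : Set (Fin n → ℝ)) (v : Fin (n+1) → (Fin n → ℝ)) : ℝ :=
  sInf {σ : ℝ | 1 ≤ σ ∧ Ω ⊆ scaledSimplex v σ}

/-- A function `ℝ^n → ℝ` is a monomial if it has the form `x ↦ ∏ xᵢ^{αᵢ}`. -/
def IsMonomial {n : ℕ} (φ : (Fin n → ℝ) → ℝ) : Prop :=
  ∃ α : Fin n → ℕ, ∀ x, φ x = ∏ i, x i ^ α i

open Finset

lemma IsMonomial.continuous {n : ℕ} {φ : (Fin n → ℝ) → ℝ} (h : IsMonomial φ) :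
    Continuous φ := by
  obtain ⟨α, hα⟩ := h
  rw [show φ = fun x => ∏ i, x i ^ α i from funext hα]
  fun_prop

section NegPart

variable {α ι : Type*} [Field α] [LinearOrder α] [IsStrictOrderedRing α] [Fintype ι]

lemma abs_eq_add_two_mul_negPart (a : α) : |a| = a + 2 * a⁻ := by
  linarith [posPart_add_negPart a, posPart_sub_negPart a]

lemma sum_add_two_mul_negPart_le_sum_abs (w : ι → α) (j : ι) :
    ∑ i, w i + 2 * (w j)⁻ ≤ ∑ i, |w i| := by
  simp only [abs_eq_add_two_mul_negPart, sum_add_distrib, ← mul_sum]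
  have := single_le_sum (fun i _ => negPart_nonneg (w i)) (mem_univ j)
  linarith

lemma sum_abs_le_of_negPart_le {w : ι → α} (hw : 0 < ∑ i, w i) {M : α} (hM : ∀ i, (w i)⁻ ≤ M) :
    ∑ i, |w i| ≤ ∑ i, w i + 2 * ((Fintype.card ι : α) - 1) * M := by
  classical
  obtain ⟨j, -, hj⟩ : ∃ j ∈ univ, 0 < w j :=
    exists_lt_of_sum_lt (f := fun _ => 0) (by simpa using hw)
  have hneg : ∑ i, (w i)⁻ ≤ ((Fintype.card ι : α) - 1) * M := by
    rw [← sum_erase_add _ _ (mem_univ j), negPart_eq_zero.2 hj.le, add_zero]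
    calc ∑ i ∈ univ.erase j, (w i)⁻
        ≤ (univ.erase j).card • M := sum_le_card_nsmul _ _ _ fun i _ => hM i
      _ = ((Fintype.card ι : α) - 1) * M := by
        rw [card_erase_of_mem (mem_univ j), nsmul_eq_mul, card_univ,
          Nat.cast_pred (Fintype.card_pos_iff.2 ⟨j⟩)]
  simp only [abs_eq_add_two_mul_negPart, sum_add_distrib, ← mul_sum]
  linarith

end NegPart

namespace AffineBasis

variable {ι k V P : Type*} [CommRing k] [AddCommGroup V] [Module k V] [AddTorsor V P]

lemma coord_homothety (b : AffineBasis ι k P) (j : ι) (c z : P) (σ : k) :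
    b.coord j (AffineMap.homothety c σ z) = σ * (b.coord j z - b.coord j c) + b.coord j c := by
  rw [AffineMap.homothety_eq_lineMap, AffineMap.apply_lineMap, AffineMap.lineMap_apply_module]
  simp only [smul_eq_mul]
  ring

end AffineBasis

section Simplex

variable {m : ℕ} (b : AffineBasis (Fin (m+1)) ℝ (Fin m → ℝ))

lemma mem_scaledSimplex_iff {σ : ℝ} (hσ : 0 < σ) {y : Fin m → ℝ} :
    y ∈ scaledSimplex b σ ↔ ∀ j, ((m : ℝ) + 1) * -b.coord j y ≤ σ - 1 := by
  set c := univ.centroid ℝ b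
  have hc : ∀ j, b.coord j c = ((m : ℝ) + 1)⁻¹ := fun j => by
    rw [b.coord_apply_centroid (mem_univ j)]
    simp
  have hinv : ∀ r r' : ℝ, r * r' = 1 → Function.LeftInverse (AffineMap.homothety c r)
      (AffineMap.homothety c r') := fun r r' h z => by
    rw [← AffineMap.homothety_mul_apply, h, AffineMap.homothety_one, AffineMap.id_apply]
  rw [scaledSimplex, simplexHull, b.convexHull_eq_nonneg_coord,
    Set.image_eq_preimage_of_inverse (hinv _ _ (inv_mul_cancel₀ hσ.ne'))
      (hinv _ _ (mul_inv_cancel₀ hσ.ne'))]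
  simp only [Set.mem_preimage, Set.mem_ofPred_eq, b.coord_homothety, hc]
  refine forall_congr' fun j => ?_
  have hm : (0 : ℝ) < (m : ℝ) + 1 := by positivity
  rw [← mul_le_mul_iff_of_pos_left (mul_pos hσ hm), mul_zero]
  field_simp
  constructor <;> intro h <;> linarith

lemma absCoef_eq_of_isGreatest {K : Set (Fin m → ℝ)} {L : ℝ}
    (hL : IsGreatest (⋃ j, (fun y => -b.coord j y) '' K) L) :
    absCoef K b = 1 + ((m : ℝ) + 1) * max L 0 := by
  suffices {σ | 1 ≤ σ ∧ K ⊆ scaledSimplex b σ} = Set.Ici (1 + ((m : ℝ) + 1) * max L 0) by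
    rw [absCoef, this, csInf_Ici]
  obtain ⟨j₀, y₀, hy₀, rfl⟩ := Set.mem_iUnion.1 hL.1
  have hle : ∀ y ∈ K, ∀ j, -b.coord j y ≤ -b.coord j₀ y₀ :=
    fun y hy j => hL.2 (Set.mem_iUnion.2 ⟨j, y, hy, rfl⟩)
  have hm : (0 : ℝ) ≤ (m : ℝ) + 1 := by positivity
  ext σ
  simp only [Set.mem_ofPred_eq, Set.mem_Ici]
  constructor
  · rintro ⟨hσ, hK⟩
    have h₀ := (mem_scaledSimplex_iff b (by linarith)).1 (hK hy₀) j₀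
    rw [mul_max_of_nonneg _ _ hm, mul_zero]
    linarith [max_le h₀ (sub_nonneg.2 hσ)]
  · intro hσ
    have h0 : 0 ≤ ((m : ℝ) + 1) * max (-b.coord j₀ y₀) 0 := by positivity
    refine ⟨by linarith, fun y hy => (mem_scaledSimplex_iff b (by linarith)).2 fun j => ?_⟩
    calc ((m : ℝ) + 1) * -b.coord j y ≤ ((m : ℝ) + 1) * max (-b.coord j₀ y₀) 0 := by
          gcongr
          exact (hle y hy j).trans (le_max_left _ _)
      _ ≤ σ - 1 := by linarith

lemma sSup_sum_abs_coord_mem_Icc {K : Set (Fin m → ℝ)} (hK : IsCompact K) (hne : K.Nonempty)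
    {L : ℝ} (hL : IsGreatest (⋃ j, (fun y => -b.coord j y) '' K) L) :
    sSup {s | ∃ y ∈ K, s = ∑ j, |b.coord j y|} ∈
      Set.Icc (1 + 2 * max L 0) (1 + 2 * m * max L 0) := by
  obtain ⟨y₀, hy₀, hy₀max⟩ := hK.exists_isMaxOn hne (continuous_finsetSum _ fun j _ =>
    (b.coord j).continuous_of_finiteDimensional.abs).continuousOn
  have hN : sSup {s | ∃ y ∈ K, s = ∑ j, |b.coord j y|} = ∑ j, |b.coord j y₀| :=
    IsGreatest.csSup_eq ⟨⟨y₀, hy₀, rfl⟩, by rintro _ ⟨y, hy, rfl⟩; exact hy₀max hy⟩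
  rw [hN]
  constructor
  · obtain ⟨j, y, hy, rfl⟩ := Set.mem_iUnion.1 hL.1
    have := sum_add_two_mul_negPart_le_sum_abs (fun i => b.coord i y) j
    rw [b.sum_coord_apply_eq_one] at this
    exact this.trans (hy₀max hy)
  · have hneg : ∀ j, (b.coord j y₀)⁻ ≤ max L 0 := fun j =>
      max_le_max (hL.2 (Set.mem_iUnion.2 ⟨j, y₀, hy₀, rfl⟩)) le_rfl
    simpa [b.sum_coord_apply_eq_one] using
      sum_abs_le_of_negPart_le (by simp [b.sum_coord_apply_eq_one]) hneg

lemma absCoef_bounds_of_sSup_sum_abs_coord {K : Set (Fin m → ℝ)} (hK : IsCompact K)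
    (hne : K.Nonempty) :
    let N := sSup {s | ∃ y ∈ K, s = ∑ j, |b.coord j y|}
    (1/2) * (1 + 1/(m : ℝ)) * (N - 1) + 1 ≤ absCoef K b ∧
      absCoef K b ≤ ((m : ℝ) + 1)/2 * (N - 1) + 1 := by
  obtain ⟨L, hL⟩ := (isCompact_iUnion fun j =>
    hK.image (b.coord j).continuous_of_finiteDimensional.neg).exists_isGreatest
    (Set.nonempty_iUnion.2 ⟨0, hne.image _⟩)
  intro N
  obtain ⟨hupper, hlower⟩ := sSup_sum_abs_coord_mem_Icc b hK hne hL
  rw [absCoef_eq_of_isGreatest b hL]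
  have hM : 0 ≤ max L 0 := le_max_right _ _
  constructor
  · calc (1/2) * (1 + 1/(m : ℝ)) * (N - 1) + 1
          ≤ (1/2) * (1 + 1/(m : ℝ)) * (2 * m * max L 0) + 1 := by
          gcongr
          linarith
      _ = (m + m * (m : ℝ)⁻¹) * max L 0 + 1 := by ring
      -- `m * m⁻¹ ≤ 1` also holds for `m = 0`, where `1/m` is the junk value `0`
      _ ≤ 1 + ((m : ℝ) + 1) * max L 0 := by nlinarith [mul_inv_le_one (a := (m : ℝ))]
  · nlinarith

end Simplex

section Interpolation

variable {X 𝕜 : Type*} [CommRing 𝕜] {m : ℕ} {φ : Fin (m+1) → X → 𝕜} {T : X → Fin m → 𝕜}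

lemma exists_affineMap_comp_eq_of_mem_span (h1 : ∀ x, φ 0 x = 1)
    (hT : ∀ x i, T x i = φ i.succ x) {f : X → 𝕜} (hf : f ∈ Submodule.span 𝕜 (Set.range φ)) :
    ∃ A : (Fin m → 𝕜) →ᵃ[𝕜] 𝕜, f = A ∘ T := by
  induction hf using Submodule.span_induction with
  | mem f hf =>
    obtain ⟨i, rfl⟩ := hf
    cases i using Fin.cases with
    | zero => exact ⟨AffineMap.const 𝕜 _ 1, funext h1⟩
    | succ i => exact ⟨(LinearMap.proj (R := 𝕜) (φ := fun _ : Fin m => 𝕜) i).toAffineMap,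
      funext fun x => (hT x i).symm⟩
  | zero => exact ⟨0, rfl⟩
  | add f g _ _ hf hg =>
    obtain ⟨A, rfl⟩ := hf
    obtain ⟨B, rfl⟩ := hg
    exact ⟨A + B, rfl⟩
  | smul a f _ hf =>
    obtain ⟨A, rfl⟩ := hf
    exact ⟨a • A, rfl⟩

lemma eq_coord_comp_of_mem_span (h1 : ∀ x, φ 0 x = 1) (hT : ∀ x i, T x i = φ i.succ x)
    (b : AffineBasis (Fin (m+1)) 𝕜 (Fin m → 𝕜)) {nodes : Fin (m+1) → X}
    (hb : ∀ k, b k = T (nodes k)) {f : X → 𝕜} (hf : f ∈ Submodule.span 𝕜 (Set.range φ))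
    {j : Fin (m+1)} (hδ : ∀ k, f (nodes k) = if j = k then 1 else 0) :
    f = b.coord j ∘ T := by
  obtain ⟨A, rfl⟩ := exists_affineMap_comp_eq_of_mem_span h1 hT hf
  congr
  refine AffineMap.ext_on b.tot ?_
  rintro _ ⟨k, rfl⟩
  rw [b.coord_apply, hb]
  exact hδ k

end Interpolation

theorem absCoef_bounds_of_projNorm {n m : ℕ}
    (Ω : Set (Fin n → ℝ)) (hΩ : IsCompact Ω)
    (φ : Fin (m+1) → ((Fin n → ℝ) → ℝ))
    (hmono : ∀ i, IsMonomial (φ i))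
    (h1 : ∀ x, φ 0 x = 1)
    (nodes : Fin (m+1) → (Fin n → ℝ)) (hnodes : ∀ j, nodes j ∈ Ω)
    (lam : Fin (m+1) → ((Fin n → ℝ) → ℝ))
    (hspan : ∀ j, lam j ∈ Submodule.span ℝ (Set.range φ))
    (hdelta : ∀ j k, lam j (nodes k) = if j = k then 1 else 0)
    (T : (Fin n → ℝ) → (Fin m → ℝ)) (hT : ∀ x i, T x i = φ i.succ x)
    (hSimp : AffineIndependent ℝ (fun j => T (nodes j)))
    (normP : ℝ)
    (hnorm : normP = sSup {s : ℝ | ∃ x ∈ Ω, s = ∑ j, |lam j x|}) :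
    (1/2) * (1 + 1/(m : ℝ)) * (normP - 1) + 1
      ≤ absCoef (T '' Ω) (fun j => T (nodes j)) ∧
    absCoef (T '' Ω) (fun j => T (nodes j)) ≤ ((m : ℝ) + 1)/2 * (normP - 1) + 1 := by
  let b : AffineBasis (Fin (m+1)) ℝ (Fin m → ℝ) :=
    ⟨fun j => T (nodes j), hSimp,
      hSimp.affineSpan_eq_top_iff_card_eq_finrank_add_one.2 (by simp)⟩
  have hlam : ∀ j, lam j = b.coord j ∘ T :=
    fun j => eq_coord_comp_of_mem_span h1 hT b (fun _ => rfl) (hspan j) (hdelta j)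
  have hTcont : Continuous T :=
    continuous_pi fun i => by simpa only [hT] using (hmono i.succ).continuous
  have hnormP : normP = sSup {s | ∃ y ∈ T '' Ω, s = ∑ j, |b.coord j y|} := by
    simpa only [hlam, Function.comp_apply, Set.exists_mem_image] using hnorm
  exact hnormP ▸ absCoef_bounds_of_sSup_sum_abs_coord b (hΩ.image hTcont)
    ⟨_, Set.mem_image_of_mem T (hnodes 0)⟩
end

section
/- Let Ω = [−1,1], Π = Π_2(R^1) the quadratic polynomials, and P : C[−1,1] → Π an arbitrary interpolation projector with three admissible nodes −1 ≤ r < s < t ≤ 1. Let T(x) = (x, x²) and S ⊂ R² the triangle with vertices (r,r²), (s,s²), (t,t²). Then ξ(T([−1,1]); S) = (3‖P‖ − 1)/2, where ‖P‖ is the operator norm of P on C[−1,1]. -/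
/-- The Lagrange basis polynomial for node `j` of the node family `c`. -/
noncomputable def lag {k : ℕ} (c : Fin k → ℝ) (j : Fin k) (x : ℝ) : ℝ :=
  ∏ i ∈ Finset.univ.erase j, (x - c i) / (c j - c i)

/-- The norm of the interpolation projector with nodes `c`, i.e. the maximum over
`[-1,1]` of the Lebesgue function `x ↦ ∑ⱼ |λⱼ(x)|`. -/
noncomputable def projNorm {k : ℕ} (c : Fin k → ℝ) : ℝ :=
  sSup {s : ℝ | ∃ x ∈ Set.Icc (-1:ℝ) 1, s = ∑ j, |lag c j x|}

open Finset

section Lagrange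

open Polynomial

variable {k : ℕ} {c : Fin k → ℝ}

theorem lag_eq_eval_basis (j : Fin k) (x : ℝ) :
    lag c j x = (Lagrange.basis univ c j).eval x := by
  simp only [lag, Lagrange.basis, eval_prod, Lagrange.basisDivisor, eval_mul, eval_C, eval_sub,
    eval_X, div_eq_inv_mul]

theorem sum_lag_mul_pow (hc : Function.Injective c) (m : Fin k) (x : ℝ) :
    ∑ j, lag c j x * c j ^ (m : ℕ) = x ^ (m : ℕ) := by
  have hX : (X ^ (m : ℕ) : ℝ[X]) = Lagrange.interpolate univ c (fun j => c j ^ (m : ℕ)) :=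
    Lagrange.eq_interpolate_of_eval_eq _ hc.injOn
      (by rw [degree_X_pow, card_univ, Fintype.card_fin]; exact_mod_cast m.isLt)
      (fun j _ => eval_X_pow _)
  have hx := congrArg (eval x) hX
  simpa [Lagrange.interpolate_apply, eval_finsetSum, lag_eq_eval_basis, mul_comm] using hx.symm

theorem eq_lag_of_sum_mul_pow (hc : Function.Injective c) {x : ℝ} {u : Fin k → ℝ}
    (hu : ∀ m : Fin k, ∑ j, u j * c j ^ (m : ℕ) = x ^ (m : ℕ)) : u = fun j => lag c j x := by
  have h := Matrix.eq_zero_of_forall_pow_sum_mul_pow_eq_zero (v := u - fun j => lag c j x) hc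
    fun m => by simp [sub_mul, sum_sub_distrib, hu, sum_lag_mul_pow hc]
  exact sub_eq_zero.1 h

end Lagrange

section Simplex

variable {n : ℕ} (v : Fin (n+1) → (Fin n → ℝ))

theorem simplexHull_eq_image_stdSimplex :
    simplexHull v = Fintype.linearCombination ℝ v '' stdSimplex ℝ (Fin (n+1)) := by
  rw [simplexHull, ← convexHull_rangle_single_eq_stdSimplex, LinearMap.image_convexHull,
    ← Set.range_comp]
  congr 1
  ext i : 1
  simp [Fintype.linearCombination_apply_single]

theorem centroid_eq_sum_smul : univ.centroid ℝ v = ∑ i, ((n : ℝ) + 1)⁻¹ • v i := by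
  rw [centroid_def, affineCombination_eq_linear_combination _ _ _
    (sum_centroidWeights_eq_one_of_card_ne_zero _ _ (by simp))]
  simp [centroidWeights_apply]

theorem homothety_centroid_sum_smul (σ : ℝ) (w : Fin (n+1) → ℝ) :
    AffineMap.homothety (univ.centroid ℝ v) σ (∑ i, w i • v i) =
      ∑ i, (σ * w i + (1 - σ) / (n + 1)) • v i := by
  rw [AffineMap.homothety_apply, centroid_eq_sum_smul]
  simp only [add_smul, sum_add_distrib, mul_smul, div_eq_mul_inv, ← smul_sum, vsub_eq_sub,
    vadd_eq_add]
  module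

theorem sum_const_div_succ (n : ℕ) (a : ℝ) : ∑ _i : Fin (n+1), a / (n + 1) = a := by
  rw [sum_const, card_univ, Fintype.card_fin, nsmul_eq_mul]
  push_cast
  field_simp

theorem mem_scaledSimplex_iff_s6 {σ : ℝ} (hσ : 0 < σ) (p : Fin n → ℝ) :
    p ∈ scaledSimplex v σ ↔ ∃ w : Fin (n+1) → ℝ,
      (∀ i, (1 - σ) / (n + 1) ≤ w i) ∧ ∑ i, w i = 1 ∧ ∑ i, w i • v i = p := by
  simp only [scaledSimplex, simplexHull_eq_image_stdSimplex, Set.image_image, Set.mem_image,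
    Fintype.linearCombination_apply, homothety_centroid_sum_smul]
  constructor
  · rintro ⟨w, ⟨hw0, hw1⟩, rfl⟩
    refine ⟨fun i => σ * w i + (1 - σ) / (n + 1), fun i => ?_, ?_, rfl⟩
    · simpa using mul_nonneg hσ.le (hw0 i)
    · rw [sum_add_distrib, ← mul_sum, hw1, sum_const_div_succ]
      ring
  · rintro ⟨u, hu, hu1, rfl⟩
    refine ⟨fun i => (u i - (1 - σ) / (n + 1)) / σ,
      ⟨fun i => div_nonneg (sub_nonneg.2 (hu i)) hσ.le, ?_⟩, ?_⟩
    · rw [← sum_div, sum_sub_distrib, hu1, sum_const_div_succ]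
      field_simp
      ring
    · congr! 3 with i
      field_simp
      ring

end Simplex

theorem absCoef_eq_max_of_forall_subset_iff {n : ℕ} {Ω : Set (Fin n → ℝ)}
    {v : Fin (n+1) → (Fin n → ℝ)} {m : ℝ}
    (h : ∀ σ, 1 ≤ σ → (Ω ⊆ scaledSimplex v σ ↔ (1 - σ) / (n + 1) ≤ m)) :
    absCoef Ω v = max 1 (1 - (n + 1) * m) := by
  have hset : {σ : ℝ | 1 ≤ σ ∧ Ω ⊆ scaledSimplex v σ} = Set.Ici (max 1 (1 - (n + 1) * m)) := by
    ext σ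
    simp only [Set.mem_ofPred_eq, Set.mem_Ici, max_le_iff]
    refine and_congr_right fun hσ => ?_
    rw [h σ hσ, div_le_iff₀ (by positivity)]
    constructor <;> intro <;> linarith
  rw [absCoef, hset, csInf_Ici]

def momentCurve (n : ℕ) (x : ℝ) : Fin n → ℝ := fun d => x ^ ((d : ℕ) + 1)

/-- The least barycentric coordinate of `momentCurve k x` in the simplex with vertices
`momentCurve k ∘ c`. -/
noncomputable def lagMin {k : ℕ} (c : Fin (k+1) → ℝ) (x : ℝ) : ℝ :=
  univ.inf' univ_nonempty fun j => lag c j x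

theorem continuous_lagMin {k : ℕ} (c : Fin (k+1) → ℝ) : Continuous (lagMin c) := by
  unfold lagMin lag
  fun_prop

theorem sum_smul_momentCurve_eq_iff {n : ℕ} (c : Fin (n+1) → ℝ) (u : Fin (n+1) → ℝ) (x : ℝ) :
    (∑ i, u i = 1 ∧ ∑ i, u i • momentCurve n (c i) = momentCurve n x) ↔
      ∀ m : Fin (n+1), ∑ j, u j * c j ^ (m : ℕ) = x ^ (m : ℕ) := by
  rw [Fin.forall_fin_succ, funext_iff]
  simp [momentCurve, Finset.sum_apply]

section MomentCurve

variable {n : ℕ} {c : Fin (n+1) → ℝ}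

theorem momentCurve_mem_scaledSimplex_iff (hc : Function.Injective c) {σ : ℝ} (hσ : 0 < σ)
    (x : ℝ) : momentCurve n x ∈ scaledSimplex (momentCurve n ∘ c) σ ↔
      (1 - σ) / (n + 1) ≤ lagMin c x := by
  rw [mem_scaledSimplex_iff_s6 _ hσ, lagMin, le_inf'_iff]
  simp only [Function.comp_apply, mem_univ, forall_const]
  constructor
  · rintro ⟨w, hw, hw1, hwx⟩
    obtain rfl := eq_lag_of_sum_mul_pow hc ((sum_smul_momentCurve_eq_iff c w x).1 ⟨hw1, hwx⟩)
    exact hw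
  · intro h
    exact ⟨_, h, (sum_smul_momentCurve_eq_iff c _ x).2 fun m => sum_lag_mul_pow hc m x⟩

theorem absCoef_image_momentCurve (hc : Function.Injective c) {K : Set ℝ} {x₀ : ℝ}
    (hx₀ : x₀ ∈ K) (hmin : IsMinOn (lagMin c) K x₀) :
    absCoef (momentCurve n '' K) (momentCurve n ∘ c) = max 1 (1 - (n + 1) * lagMin c x₀) := by
  refine absCoef_eq_max_of_forall_subset_iff fun σ hσ => ?_
  rw [Set.image_subset_iff]
  simp only [Set.subset_def, Set.mem_preimage,
    momentCurve_mem_scaledSimplex_iff hc (zero_lt_one.trans_le hσ)]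
  exact ⟨fun h => h x₀ hx₀, fun h x hx => h.trans (hmin hx)⟩

end MomentCurve

theorem sum_abs_eq_one_sub_two_mul_min_inf' {ι : Type*} [Fintype ι] [Nonempty ι] {w : ι → ℝ}
    (hw : ∑ i, w i = 1) (hneg : ∀ i j, w i < 0 → w j < 0 → i = j) :
    ∑ i, |w i| = 1 - 2 * min 0 (univ.inf' univ_nonempty w) := by
  by_cases h : ∃ i, w i < 0
  · obtain ⟨i, hi⟩ := h
    have hpos : ∀ j, j ≠ i → 0 ≤ w j := fun j hji => not_lt.1 fun hj => hji (hneg j i hj hi)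
    have hinf : univ.inf' univ_nonempty w = w i := by
      refine le_antisymm (inf'_le _ (mem_univ i)) (le_inf' _ _ fun j _ => ?_)
      rcases eq_or_ne j i with rfl | hji
      · rfl
      · exact hi.le.trans (hpos j hji)
    have hdiff : ∑ j, (|w j| - w j) = |w i| - w i :=
      sum_eq_single i (fun j _ hji => by rw [abs_of_nonneg (hpos j hji), sub_self])
        (fun h => absurd (mem_univ i) h)
    rw [sum_sub_distrib, hw, abs_of_neg hi] at hdiff
    rw [hinf, min_eq_right hi.le]
    linarith
  · simp only [not_exists, not_lt] at h
    rw [min_eq_left (le_inf' _ _ fun j _ => h j)]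
    simpa [abs_of_nonneg (h _)] using hw

theorem eq_of_neg_of_neg_of_sum_eq_one_of_prod_nonpos {w : Fin 3 → ℝ} (hw : ∑ i, w i = 1)
    (hprod : ∏ i, w i ≤ 0) {i j : Fin 3} (hi : w i < 0) (hj : w j < 0) : i = j := by
  rw [Fin.sum_univ_three] at hw
  rw [Fin.prod_univ_three] at hprod
  fin_cases i <;> fin_cases j <;> simp at hi hj ⊢ <;> nlinarith [mul_pos_of_neg_of_neg hi hj]

section ThreeNodes

variable {c : Fin 3 → ℝ}

theorem prod_lag_nonpos (hc : Function.Injective c) (x : ℝ) : ∏ j, lag c j x ≤ 0 := by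
  have h01 : c 0 ≠ c 1 := hc.ne (by decide)
  have h02 : c 0 ≠ c 2 := hc.ne (by decide)
  have h12 : c 1 ≠ c 2 := hc.ne (by decide)
  have e0 : univ.erase (0 : Fin 3) = {1, 2} := by decide
  have e1 : univ.erase (1 : Fin 3) = {0, 2} := by decide
  have e2 : univ.erase (2 : Fin 3) = {0, 1} := by decide
  -- the denominators multiply to minus a square, the numerators to a square
  have hprod : ∏ j, lag c j x =
      -(((x - c 0) * (x - c 1) * (x - c 2)) / ((c 0 - c 1) * (c 0 - c 2) * (c 1 - c 2))) ^ 2 := by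
    simp only [lag, Fin.prod_univ_three, e0, e1, e2, prod_pair (show (0 : Fin 3) ≠ 1 by decide),
      prod_pair (show (0 : Fin 3) ≠ 2 by decide), prod_pair (show (1 : Fin 3) ≠ 2 by decide)]
    field_simp
    ring
  rw [hprod]
  exact neg_nonpos.2 (sq_nonneg _)

theorem sum_abs_lag_eq (hc : Function.Injective c) (x : ℝ) :
    ∑ j, |lag c j x| = 1 - 2 * min 0 (lagMin c x) := by
  have hsum : ∑ j, lag c j x = 1 := by simpa using sum_lag_mul_pow hc 0 x
  exact sum_abs_eq_one_sub_two_mul_min_inf' hsum fun i j =>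
    eq_of_neg_of_neg_of_sum_eq_one_of_prod_nonpos hsum (prod_lag_nonpos hc x)

theorem projNorm_eq_of_isMinOn (hc : Function.Injective c) {x₀ : ℝ}
    (hx₀ : x₀ ∈ Set.Icc (-1 : ℝ) 1) (hmin : IsMinOn (lagMin c) (Set.Icc (-1) 1) x₀) :
    projNorm c = 1 - 2 * min 0 (lagMin c x₀) := by
  refine IsGreatest.csSup_eq ⟨⟨x₀, hx₀, (sum_abs_lag_eq hc x₀).symm⟩, ?_⟩
  rintro _ ⟨x, hx, rfl⟩
  rw [sum_abs_lag_eq hc x]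
  linarith [min_le_min_left 0 (isMinOn_iff.1 hmin x hx)]

end ThreeNodes

theorem quadratic_absCoef_eq_projNorm_general (r s t : ℝ)
    (hrs : r < s) (hst : s < t) :
    absCoef ((fun x : ℝ => ![x, x^2]) '' Set.Icc (-1) 1)
        ![![r, r^2], ![s, s^2], ![t, t^2]] =
      (3 * projNorm ![r, s, t] - 1) / 2 := by
  have hc : Function.Injective ![r, s, t] := by
    intro i j hij
    fin_cases i <;> fin_cases j <;> simp at hij ⊢ <;> linarith
  have hcurve : (fun x : ℝ => ![x, x^2]) = momentCurve 2 := by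
    funext x d
    fin_cases d <;> simp [momentCurve]
  have hvertices : ![![r, r^2], ![s, s^2], ![t, t^2]] = momentCurve 2 ∘ ![r, s, t] := by
    funext i d
    fin_cases i <;> fin_cases d <;> simp [momentCurve]
  obtain ⟨x₀, hx₀, hmin⟩ := isCompact_Icc.exists_isMinOn
    (Set.nonempty_Icc.2 (by norm_num : (-1 : ℝ) ≤ 1)) (continuous_lagMin ![r, s, t]).continuousOn
  rw [hcurve, hvertices, absCoef_image_momentCurve hc hx₀ hmin,
    projNorm_eq_of_isMinOn hc hx₀ hmin]
  rcases le_total 0 (lagMin ![r, s, t] x₀) with hm | hm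
  · rw [min_eq_left hm, max_eq_left (by push_cast; linarith)]
    norm_num
  · rw [min_eq_right hm, max_eq_right (by push_cast; linarith)]
    push_cast
    ring

theorem quadratic_absCoef_eq_projNorm (r s t : ℝ)
    (hr : -1 ≤ r) (hrs : r < s) (hst : s < t) (ht : t ≤ 1) :
    absCoef ((fun x : ℝ => ![x, x^2]) '' Set.Icc (-1) 1)
        ![![r, r^2], ![s, s^2], ![t, t^2]] =
      (3 * projNorm ![r, s, t] - 1) / 2 :=
  quadratic_absCoef_eq_projNorm_general r s t hrs hst
end
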